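/- Let A = I − K ∈ L(Y) with K ∈ S(Y), suppose A is rich, σ_op(K) is uniformly Montel, and every element of σ_op(A) is injective. Then σ_op(A) is uniformly bounded below: there exists ν > 0 such that ‖B x‖ ≥ ν ‖x‖ for every B ∈ σ_op(A) and every x ∈ Y. If, moreover, there exists a subset σ of σ_op(A) consisting of surjective operators which is S-dense in σ_op(A), then every element of σ_op(A) is bijective and sup_{B ∈ σ_op(A)} ‖B⁻¹‖ < ∞. -/

import Mathlib

/-!
Suppose `σ_op(A)` were not uniformly bounded below. Shifting (`σ_op(A)` is shift invariant)
gives limit operators `D n` and vectors `x n` with `‖x n‖ ≤ 1`, `‖x n 0‖ > 1/2` and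
`D n (x n) → 0`. Richness makes `σ_op(A)` sequentially compact for the `P_m`-seminorms, so a
subsequence of `D n` converges to some `B ∈ σ_op(A)`; since `I - D n ∈ σ_op(K)` is uniformly
Montel, `x n = (I - D n) x n + D n x n` has a strictly convergent subsequence, whose limit `x₀`
satisfies `x₀ 0 ≠ 0`. Limit operators of `A ∈ S(Y)` are again in `S(Y)`, so `B x₀ = 0`,
contradicting injectivity.

The same compactness argument, applied to solutions of `B j x = y` for surjective `B j` in an
`S`-dense subset, produces a solution of `B x = y`, and the lower bound `ν` bounds every
inverse by `ν⁻¹`.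
-/

open Filter Topology

noncomputable section

/-- `ℤ^N`. -/
abbrev ZN (N : ℕ) := Fin N → ℤ

/-- The max-norm `|m| = max_i |m_i|` on `ℤ^N`, valued in `ℕ`. -/
def znorm {N : ℕ} (m : ZN N) : ℕ := Finset.univ.sup fun i => (m i).natAbs

/-- `Y = ℓ^∞(ℤ^N, U)`, realised as the bounded (automatically continuous)
functions from the discrete space `ℤ^N` to `U`. -/
abbrev Yinf (N : ℕ) (U : Type*) [NormedAddCommGroup U] [NormedSpace ℂ U] :=
  BoundedContinuousFunction (ZN N) U

/-- `L(Y)` for `Y = ℓ^∞(ℤ^N, U)`. -/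
abbrev OpY (N : ℕ) (U : Type*) [NormedAddCommGroup U] [NormedSpace ℂ U] :=
  Yinf N U →L[ℂ] Yinf N U

variable (N : ℕ) (U : Type*) [NormedAddCommGroup U] [NormedSpace ℂ U]

lemma Pproj_bound (n : ℕ) (x : Yinf N U) (m : ZN N) :
    ‖if znorm m ≤ n then x m else 0‖ ≤ ‖x‖ := by
  by_cases h : znorm m ≤ n
  · simpa [h] using x.norm_coe_le_norm m
  · simp only [if_neg h, norm_zero]; exact norm_nonneg x

/-- The projection `P_n`: `(P_n x)(m) = x(m)` if `|m| ≤ n`, else `0`. -/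
def Pproj (n : ℕ) : OpY N U :=
  LinearMap.mkContinuous
    { toFun := fun x => BoundedContinuousFunction.ofNormedAddCommGroup
        (fun m => if znorm m ≤ n then x m else 0) continuous_of_discreteTopology ‖x‖
        (Pproj_bound N U n x)
      map_add' := fun x y => by
        ext m
        by_cases h : znorm m ≤ n <;>
          simp [BoundedContinuousFunction.coe_ofNormedAddCommGroup, h]
      map_smul' := fun c x => by
        ext m
        by_cases h : znorm m ≤ n <;>
          simp [BoundedContinuousFunction.coe_ofNormedAddCommGroup, h] }
    1
    (fun x => by
      rw [one_mul]
      exact BoundedContinuousFunction.norm_ofNormedAddCommGroup_le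
        continuous_of_discreteTopology (norm_nonneg x) (Pproj_bound N U n x))

/-- `Q_n = I - P_n`. -/
def Qproj (n : ℕ) : OpY N U :=
  ContinuousLinearMap.id ℂ (Yinf N U) - Pproj N U n

/-- The shift `V_k`: `(V_k x)(m) = x(m - k)`. -/
def Vshift (k : ZN N) : OpY N U :=
  LinearMap.mkContinuous
    { toFun := fun x => BoundedContinuousFunction.ofNormedAddCommGroup
        (fun m => x (m - k)) continuous_of_discreteTopology ‖x‖
        (fun m => x.norm_coe_le_norm (m - k))
      map_add' := fun x y => by
        ext m; simp [BoundedContinuousFunction.coe_ofNormedAddCommGroup]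
      map_smul' := fun c x => by
        ext m; simp [BoundedContinuousFunction.coe_ofNormedAddCommGroup] }
    1
    (fun x => by
      rw [one_mul]
      exact BoundedContinuousFunction.norm_ofNormedAddCommGroup_le
        continuous_of_discreteTopology (norm_nonneg x) (fun m => x.norm_coe_le_norm (m - k)))

/-- `V_{-k} A V_k`. -/
def shiftedOp (A : OpY N U) (k : ZN N) : OpY N U :=
  (Vshift N U (-k)).comp (A.comp (Vshift N U k))

/-- Strict convergence in `Y = ℓ^∞(ℤ^N, U)`. -/
def SConvY (x : ℕ → Yinf N U) (x₀ : Yinf N U) : Prop :=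
  (∃ C : ℝ, ∀ j, ‖x j‖ ≤ C) ∧
  ∀ m : ℕ, Tendsto (fun j => ‖Pproj N U m (x j - x₀)‖) atTop (𝓝 0)

/-- `S(Y)`: sequential continuity with respect to strict convergence. -/
def MemSY (A : OpY N U) : Prop :=
  ∀ (x : ℕ → Yinf N U) (x₀ : Yinf N U),
    SConvY N U x x₀ → SConvY N U (fun j => A (x j)) (A x₀)

/-- `M(Y)`: Montel operators. -/
def MemMY (K : OpY N U) : Prop :=
  ∀ x : ℕ → Yinf N U, (∃ C : ℝ, ∀ j, ‖x j‖ ≤ C) →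
    ∃ (φ : ℕ → ℕ) (y : Yinf N U), StrictMono φ ∧
      SConvY N U (fun i => K (x (φ i))) y

/-- `B` is the limit of the translates of `A` along `h`. -/
def LimOpAlongY (A : OpY N U) (h : ℕ → ZN N) (B : OpY N U) : Prop :=
  ∀ m : ℕ,
    Tendsto (fun n => ‖(Pproj N U m).comp (shiftedOp N U A (h n) - B)‖) atTop (𝓝 0) ∧
    Tendsto (fun n => ‖(shiftedOp N U A (h n) - B).comp (Pproj N U m)‖) atTop (𝓝 0)

/-- `B ∈ σ_op(A)`: `B` is a limit operator of `A`. -/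
def IsLimOpY (A B : OpY N U) : Prop :=
  ∃ h : ℕ → ZN N, Tendsto (fun n => znorm (h n)) atTop atTop ∧ LimOpAlongY N U A h B

/-- `A` is rich. -/
def RichY (A : OpY N U) : Prop :=
  ∀ h : ℕ → ZN N, Tendsto (fun n => znorm (h n)) atTop atTop →
    ∃ φ : ℕ → ℕ, StrictMono φ ∧ ∃ B : OpY N U, LimOpAlongY N U A (fun n => h (φ n)) B

/-- A collection of operators is uniformly Montel. -/
def UnifMontel (𝒦 : Set (OpY N U)) : Prop :=
  ∀ Ks : ℕ → OpY N U, (∀ j, Ks j ∈ 𝒦) →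
    ∀ x : ℕ → Yinf N U, (∃ C : ℝ, ∀ j, ‖x j‖ ≤ C) →
      ∃ (φ : ℕ → ℕ) (y : Yinf N U), StrictMono φ ∧
        SConvY N U (fun i => Ks (φ i) (x (φ i))) y

/-- `σ` is `S`-dense in `𝒦`. -/
def SDense (σ 𝒦 : Set (OpY N U)) : Prop :=
  σ ⊆ 𝒦 ∧ ∀ B ∈ 𝒦, ∃ Bj : ℕ → OpY N U, (∀ j, Bj j ∈ σ) ∧
    ∀ x : Yinf N U, SConvY N U (fun j => Bj j x) (B x)

/-- A band operator: a finite sum `Σ_{|k| ≤ w} M_{b_k} V_k` with bounded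
operator-valued coefficients, described through its action. -/
def IsBandOpY (A : OpY N U) : Prop :=
  ∃ (w : ℕ) (b : ZN N → ZN N → (U →L[ℂ] U)),
    (∀ k : ZN N, ∃ C : ℝ, ∀ m : ZN N, ‖b k m‖ ≤ C) ∧
    ∀ (x : Yinf N U) (m : ZN N),
      A x m = ∑ k ∈ Fintype.piFinset (fun _ : Fin N => Finset.Icc (-(w : ℤ)) (w : ℤ)),
        b k m (x (m - k))

/-- A band-dominated operator: a norm limit of band operators. -/
def IsBandDomY (A : OpY N U) : Prop :=
  ∃ As : ℕ → OpY N U, (∀ n, IsBandOpY N U (As n)) ∧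
    Tendsto (fun n => ‖As n - A‖) atTop (𝓝 0)

/-- `A` is norm-rich (almost periodic): its translates are relatively compact
in the operator norm. -/
def NormRichY (A : OpY N U) : Prop :=
  IsCompact (closure {B : OpY N U | ∃ k : ZN N, B = shiftedOp N U A k})

/-- Fredholm: finite dimensional kernel, closed range of finite codimension. -/
def IsFredholmOp {E : Type*} [NormedAddCommGroup E] [NormedSpace ℂ E]
    (A : E →L[ℂ] E) : Prop :=
  FiniteDimensional ℂ (LinearMap.ker (A : E →ₗ[ℂ] E)) ∧
  IsClosed (LinearMap.range (A : E →ₗ[ℂ] E) : Set E) ∧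
  FiniteDimensional ℂ (E ⧸ LinearMap.range (A : E →ₗ[ℂ] E))

end

section Shifts

variable {N : ℕ} {U : Type*} [NormedAddCommGroup U] [NormedSpace ℂ U]

lemma znorm_add_le (a b : ZN N) : znorm (a + b) ≤ znorm a + znorm b :=
  Finset.sup_le fun i _ => (Int.natAbs_add_le (a i) (b i)).trans <|
    add_le_add (Finset.le_sup (f := fun i => (a i).natAbs) (Finset.mem_univ i))
      (Finset.le_sup (f := fun i => (b i).natAbs) (Finset.mem_univ i))

lemma znorm_neg (a : ZN N) : znorm (-a) = znorm a := by
  simp [znorm]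

lemma znorm_sub_le (a b : ZN N) : znorm (a - b) ≤ znorm a + znorm b := by
  simpa [sub_eq_add_neg, znorm_neg] using znorm_add_le a (-b)

lemma Pproj_apply (n : ℕ) (x : Yinf N U) (m : ZN N) :
    Pproj N U n x m = if znorm m ≤ n then x m else 0 := rfl

lemma Vshift_apply (k : ZN N) (x : Yinf N U) (m : ZN N) :
    Vshift N U k x m = x (m - k) := rfl

lemma shiftedOp_apply (A : OpY N U) (k : ZN N) (x : Yinf N U) :
    shiftedOp N U A k x = Vshift N U (-k) (A (Vshift N U k x)) := rfl

lemma norm_Pproj_apply_le (n : ℕ) (x : Yinf N U) : ‖Pproj N U n x‖ ≤ ‖x‖ :=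
  BoundedContinuousFunction.norm_le_of_nonempty.mpr (Pproj_bound N U n x)

lemma norm_Vshift_apply_le (k : ZN N) (x : Yinf N U) : ‖Vshift N U k x‖ ≤ ‖x‖ :=
  BoundedContinuousFunction.norm_le_of_nonempty.mpr fun m => x.norm_coe_le_norm (m - k)

lemma norm_apply_le_norm_Pproj (x : Yinf N U) (m : ZN N) :
    ‖x m‖ ≤ ‖Pproj N U (znorm m) x‖ := by
  simpa [Pproj_apply] using (Pproj N U (znorm m) x).norm_coe_le_norm m

lemma Pproj_Pproj_of_le {m n : ℕ} (h : m ≤ n) (x : Yinf N U) :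
    Pproj N U m (Pproj N U n x) = Pproj N U m x := by
  ext j
  simp only [Pproj_apply]
  split_ifs <;> first | rfl | omega

lemma norm_Pproj_comp_le_of_le {m n : ℕ} (h : m ≤ n) (D : OpY N U) :
    ‖(Pproj N U m).comp D‖ ≤ ‖(Pproj N U n).comp D‖ :=
  ContinuousLinearMap.opNorm_le_bound _ (norm_nonneg _) fun x => by
    rw [ContinuousLinearMap.comp_apply, ← Pproj_Pproj_of_le h]
    exact (norm_Pproj_apply_le m _).trans (((Pproj N U n).comp D).le_opNorm x)

lemma eq_of_forall_Pproj_eq {x y : Yinf N U} (h : ∀ m, Pproj N U m x = Pproj N U m y) :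
    x = y := by
  ext j
  simpa [Pproj_apply] using DFunLike.congr_fun (h (znorm j)) j

lemma Vshift_Vshift (k l : ZN N) (x : Yinf N U) :
    Vshift N U k (Vshift N U l x) = Vshift N U (k + l) x := by
  ext m
  simp only [Vshift_apply, sub_sub]

lemma Vshift_zero_apply (x : Yinf N U) : Vshift N U 0 x = x := by
  ext m
  simp only [Vshift_apply, sub_zero]

lemma Vshift_Vshift_neg (k : ZN N) (x : Yinf N U) :
    Vshift N U k (Vshift N U (-k) x) = x := by
  rw [Vshift_Vshift, add_neg_cancel, Vshift_zero_apply]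

lemma shiftedOp_sub (A B : OpY N U) (k : ZN N) :
    shiftedOp N U (A - B) k = shiftedOp N U A k - shiftedOp N U B k := by
  ext x : 1
  simp only [shiftedOp_apply, sub_apply, map_sub]

lemma shiftedOp_id (k : ZN N) :
    shiftedOp N U (ContinuousLinearMap.id ℂ (Yinf N U)) k = ContinuousLinearMap.id ℂ _ := by
  ext x : 1
  rw [shiftedOp_apply, ContinuousLinearMap.id_apply, Vshift_Vshift, neg_add_cancel,
    Vshift_zero_apply, ContinuousLinearMap.id_apply]

lemma shiftedOp_shiftedOp (A : OpY N U) (k v : ZN N) :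
    shiftedOp N U (shiftedOp N U A k) v = shiftedOp N U A (k + v) := by
  ext x : 1
  simp only [shiftedOp_apply, Vshift_Vshift, neg_add_rev]

lemma norm_Pproj_Vshift_le (m : ℕ) (k : ZN N) (x : Yinf N U) :
    ‖Pproj N U m (Vshift N U k x)‖ ≤ ‖Pproj N U (m + znorm k) x‖ := by
  refine BoundedContinuousFunction.norm_le_of_nonempty.mpr fun j => ?_
  rw [Pproj_apply]
  split_ifs with hj
  · have hjk : znorm (j - k) ≤ m + znorm k := (znorm_sub_le j k).trans (by omega)
    simpa [Vshift_apply, Pproj_apply, hjk] using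
      (Pproj N U (m + znorm k) x).norm_coe_le_norm (j - k)
  · simp

lemma Pproj_Vshift_Pproj (m : ℕ) (k : ZN N) (x : Yinf N U) :
    Pproj N U (m + znorm k) (Vshift N U k (Pproj N U m x)) = Vshift N U k (Pproj N U m x) := by
  ext j
  by_cases hjk : znorm (j - k) ≤ m
  · have hj : znorm j ≤ m + znorm k := by
      simpa using (znorm_add_le (j - k) k).trans (by omega)
    simp only [Pproj_apply, Vshift_apply, if_pos hj]
  · simp [Pproj_apply, Vshift_apply, hjk]

lemma norm_Pproj_comp_shiftedOp_le (m : ℕ) (v : ZN N) (D : OpY N U) :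
    ‖(Pproj N U m).comp (shiftedOp N U D v)‖ ≤ ‖(Pproj N U (m + znorm v)).comp D‖ :=
  ContinuousLinearMap.opNorm_le_bound _ (norm_nonneg _) fun x => by
    rw [ContinuousLinearMap.comp_apply, shiftedOp_apply]
    refine (norm_Pproj_Vshift_le m (-v) _).trans ?_
    rw [znorm_neg]
    exact ((Pproj N U (m + znorm v)).comp D).le_opNorm_of_le (norm_Vshift_apply_le v x)

lemma norm_shiftedOp_comp_Pproj_le (m : ℕ) (v : ZN N) (D : OpY N U) :
    ‖(shiftedOp N U D v).comp (Pproj N U m)‖ ≤ ‖D.comp (Pproj N U (m + znorm v))‖ :=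
  ContinuousLinearMap.opNorm_le_bound _ (norm_nonneg _) fun x => by
    rw [ContinuousLinearMap.comp_apply, shiftedOp_apply]
    refine (norm_Vshift_apply_le _ _).trans ?_
    rw [← Pproj_Vshift_Pproj]
    exact (D.comp (Pproj N U (m + znorm v))).le_opNorm_of_le
      ((norm_Vshift_apply_le _ _).trans (norm_Pproj_apply_le _ _))

end Shifts

section StrictConvergence

variable {N : ℕ} {U : Type*} [NormedAddCommGroup U] [NormedSpace ℂ U]
  {x y : ℕ → Yinf N U} {x₀ y₀ : Yinf N U}

lemma sConvY_iff : SConvY N U x x₀ ↔ (∃ C : ℝ, ∀ j, ‖x j‖ ≤ C) ∧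
    ∀ m, Tendsto (fun j => Pproj N U m (x j)) atTop (𝓝 (Pproj N U m x₀)) := by
  simp only [SConvY, map_sub, ← tendsto_iff_norm_sub_tendsto_zero]

lemma SConvY.tendsto_Pproj (hx : SConvY N U x x₀) (m : ℕ) :
    Tendsto (fun j => Pproj N U m (x j)) atTop (𝓝 (Pproj N U m x₀)) :=
  (sConvY_iff.1 hx).2 m

lemma sConvY_const (a : Yinf N U) : SConvY N U (fun _ => a) a :=
  ⟨⟨‖a‖, fun _ => le_rfl⟩, fun m => by simp⟩

lemma sConvY_zero_of_tendsto_norm (hx : Tendsto (fun j => ‖x j‖) atTop (𝓝 0)) :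
    SConvY N U x 0 := by
  obtain ⟨C, hC⟩ := hx.bddAbove_range
  refine ⟨⟨C, fun j => hC ⟨j, rfl⟩⟩, fun m => squeeze_zero (fun _ => norm_nonneg _)
    (fun j => ?_) hx⟩
  simpa only [sub_zero] using norm_Pproj_apply_le m (x j)

lemma SConvY.comp_strictMono (hx : SConvY N U x x₀) {φ : ℕ → ℕ} (hφ : StrictMono φ) :
    SConvY N U (fun j => x (φ j)) x₀ :=
  ⟨hx.1.imp fun _ hC j => hC (φ j), fun m => (hx.2 m).comp hφ.tendsto_atTop⟩

lemma SConvY.add (hx : SConvY N U x x₀) (hy : SConvY N U y y₀) :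
    SConvY N U (fun j => x j + y j) (x₀ + y₀) := by
  obtain ⟨⟨C, hC⟩, hxP⟩ := sConvY_iff.1 hx
  obtain ⟨⟨D, hD⟩, hyP⟩ := sConvY_iff.1 hy
  refine sConvY_iff.2 ⟨⟨C + D, fun j => (norm_add_le _ _).trans (add_le_add (hC j) (hD j))⟩,
    fun m => ?_⟩
  simpa only [map_add] using (hxP m).add (hyP m)

lemma SConvY.sub (hx : SConvY N U x x₀) (hy : SConvY N U y y₀) :
    SConvY N U (fun j => x j - y j) (x₀ - y₀) := by
  obtain ⟨⟨C, hC⟩, hxP⟩ := sConvY_iff.1 hx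
  obtain ⟨⟨D, hD⟩, hyP⟩ := sConvY_iff.1 hy
  refine sConvY_iff.2 ⟨⟨C + D, fun j => (norm_sub_le _ _).trans (add_le_add (hC j) (hD j))⟩,
    fun m => ?_⟩
  simpa only [map_sub] using (hxP m).sub (hyP m)

lemma SConvY.unique {a b : Yinf N U} (ha : SConvY N U x a) (hb : SConvY N U x b) : a = b :=
  eq_of_forall_Pproj_eq fun m => tendsto_nhds_unique (ha.tendsto_Pproj m) (hb.tendsto_Pproj m)

lemma SConvY.tendsto_apply (hx : SConvY N U x x₀) (m : ZN N) :
    Tendsto (fun j => x j m) atTop (𝓝 (x₀ m)) :=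
  tendsto_iff_norm_sub_tendsto_zero.2 <| squeeze_zero (fun _ => norm_nonneg _)
    (fun j => norm_apply_le_norm_Pproj (x j - x₀) m) (hx.2 (znorm m))

lemma SConvY.Vshift (hx : SConvY N U x x₀) (k : ZN N) :
    SConvY N U (fun j => Vshift N U k (x j)) (Vshift N U k x₀) :=
  ⟨hx.1.imp fun _ hC j => (norm_Vshift_apply_le k _).trans (hC j), fun m =>
    squeeze_zero (fun _ => norm_nonneg _)
      (fun j => by simpa only [map_sub] using norm_Pproj_Vshift_le m k (x j - x₀))
      (hx.2 (m + znorm k))⟩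

lemma SConvY.of_tendsto_Pproj_comp_sub {Bs : ℕ → OpY N U} {B : OpY N U}
    (hBs : ∀ m, Tendsto (fun n => ‖(Pproj N U m).comp (Bs n - B)‖) atTop (𝓝 0))
    {C : ℝ} (hx : ∀ n, ‖x n‖ ≤ C) (hy : SConvY N U (fun n => Bs n (x n)) y₀) :
    SConvY N U (fun n => B (x n)) y₀ := by
  refine sConvY_iff.2 ⟨⟨‖B‖ * C, fun n => B.le_opNorm_of_le (hx n)⟩, fun m => ?_⟩
  have herr : Tendsto (fun n => (Pproj N U m).comp (Bs n - B) (x n)) atTop (𝓝 0) :=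
    tendsto_zero_iff_norm_tendsto_zero.2 <| squeeze_zero (fun _ => norm_nonneg _)
      (fun n => ((Pproj N U m).comp (Bs n - B)).le_opNorm_of_le (hx n))
      (by simpa using (hBs m).mul_const C)
  simpa using (hy.tendsto_Pproj m).sub herr

end StrictConvergence

section LimitOperators

variable {N : ℕ} {U : Type*} [NormedAddCommGroup U] [NormedSpace ℂ U] {K A B : OpY N U}

lemma memSY_id : MemSY N U (ContinuousLinearMap.id ℂ (Yinf N U)) :=
  fun _ _ hx => hx

lemma memSY_Vshift (k : ZN N) : MemSY N U (Vshift N U k) :=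
  fun _ _ hx => hx.Vshift k

lemma MemSY.sub (hA : MemSY N U A) (hB : MemSY N U B) : MemSY N U (A - B) :=
  fun x x₀ hx => (hA x x₀ hx).sub (hB x x₀ hx)

lemma MemSY.comp (hA : MemSY N U A) (hB : MemSY N U B) : MemSY N U (A.comp B) :=
  fun x x₀ hx => hA _ _ (hB x x₀ hx)

lemma memSY_shiftedOp (hA : MemSY N U A) (k : ZN N) : MemSY N U (shiftedOp N U A k) :=
  (memSY_Vshift _).comp (hA.comp (memSY_Vshift k))

/-- Limit operators inherit strict continuity: `B` is uniformly approximated, on each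
`P_m`-seminorm, by translates of `A`, which are strictly continuous. -/
lemma MemSY.of_isLimOp (hA : MemSY N U A) (hB : IsLimOpY N U A B) : MemSY N U B := by
  intro x x₀ hx
  obtain ⟨C, hC⟩ := hx.1
  obtain ⟨h, -, hlim⟩ := hB
  refine ⟨⟨‖B‖ * C, fun j => B.le_opNorm_of_le (hC j)⟩, fun m => ?_⟩
  have hC₀ : 0 < C + ‖x₀‖ + 1 := by linarith [(norm_nonneg (x 0)).trans (hC 0), norm_nonneg x₀]
  refine tendsto_zero_iff_norm_tendsto_zero.1 (NormedAddGroup.tendsto_nhds_zero.2 fun ε hε => ?_)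
  obtain ⟨n, hn⟩ := ((hlim m).1.eventually
    (gt_mem_nhds (div_pos (half_pos hε) hC₀))).exists
  have hTS := memSY_shiftedOp hA (h n)
  generalize shiftedOp N U A (h n) = T at hn hTS
  have hT := NormedAddGroup.tendsto_nhds_zero.1
    (tendsto_zero_iff_norm_tendsto_zero.2 ((hTS x x₀ hx).2 m)) _ (half_pos hε)
  filter_upwards [hT] with j hj
  have hdecomp : Pproj N U m (B (x j) - B x₀) =
      Pproj N U m (T (x j) - T x₀) - (Pproj N U m).comp (T - B) (x j - x₀) := by
    simp only [ContinuousLinearMap.comp_apply, sub_apply, map_sub]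
    abel
  have happrox : ‖(Pproj N U m).comp (T - B) (x j - x₀)‖ < ε / 2 := by
    have hz : ‖x j - x₀‖ ≤ C + ‖x₀‖ + 1 := by linarith [norm_sub_le (x j) x₀, hC j]
    exact (((Pproj N U m).comp (T - B)).le_opNorm_of_le hz).trans_lt ((lt_div_iff₀ hC₀).1 hn)
  calc ‖Pproj N U m (B (x j) - B x₀)‖
      ≤ ‖Pproj N U m (T (x j) - T x₀)‖ + ‖(Pproj N U m).comp (T - B) (x j - x₀)‖ := by
        rw [hdecomp]; exact norm_sub_le _ _
    _ < ε := by linarith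

lemma isLimOp_id_sub (hA : A = ContinuousLinearMap.id ℂ (Yinf N U) - K)
    (hB : IsLimOpY N U A B) : IsLimOpY N U K (ContinuousLinearMap.id ℂ (Yinf N U) - B) := by
  obtain ⟨h, htd, hlim⟩ := hB
  have hdiff : ∀ n, shiftedOp N U K (h n) - (ContinuousLinearMap.id ℂ (Yinf N U) - B) =
      -(shiftedOp N U A (h n) - B) := fun n => by
    rw [hA, shiftedOp_sub, shiftedOp_id]
    abel
  refine ⟨h, htd, fun m => ⟨?_, ?_⟩⟩
  · simpa only [hdiff, ContinuousLinearMap.comp_neg, norm_neg] using (hlim m).1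
  · simpa only [hdiff, ContinuousLinearMap.neg_comp, norm_neg] using (hlim m).2

lemma isLimOp_shiftedOp (hB : IsLimOpY N U A B) (v : ZN N) :
    IsLimOpY N U A (shiftedOp N U B v) := by
  obtain ⟨h, htd, hlim⟩ := hB
  refine ⟨fun n => h n + v, ?_, fun m => ?_⟩
  · refine tendsto_atTop_mono (fun n => ?_) ((tendsto_sub_atTop_nat (znorm v)).comp htd)
    have := znorm_sub_le (h n + v) v
    rw [add_sub_cancel_right] at this
    simp only [Function.comp_apply]
    omega
  · have hdiff : ∀ n, shiftedOp N U A (h n + v) - shiftedOp N U B v =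
        shiftedOp N U (shiftedOp N U A (h n) - B) v := fun n => by
      rw [shiftedOp_sub, shiftedOp_shiftedOp]
    refine ⟨squeeze_zero (fun _ => norm_nonneg _) (fun n => ?_) (hlim (m + znorm v)).1,
      squeeze_zero (fun _ => norm_nonneg _) (fun n => ?_) (hlim (m + znorm v)).2⟩
    · rw [hdiff]; exact norm_Pproj_comp_shiftedOp_le m v _
    · rw [hdiff]; exact norm_shiftedOp_comp_Pproj_le m v _

lemma RichY.exists_isLimOp_subseq (hrich : RichY N U A) {Bs : ℕ → OpY N U}
    (hBs : ∀ n, IsLimOpY N U A (Bs n)) :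
    ∃ φ : ℕ → ℕ, StrictMono φ ∧ ∃ B, IsLimOpY N U A B ∧
      ∀ m, Tendsto (fun n => ‖(Pproj N U m).comp (Bs (φ n) - B)‖) atTop (𝓝 0) := by
  -- diagonal choice: a shift `k n`, at least `n` far out, whose translate of `A` is
  -- `1/(n+1)`-close to `Bs n` on the ball of radius `n`
  have hsel : ∀ n : ℕ, ∃ k : ZN N, n ≤ znorm k ∧
      ‖(Pproj N U n).comp (shiftedOp N U A k - Bs n)‖ < 1 / ((n : ℝ) + 1) := fun n => by
    obtain ⟨h, htd, hlim⟩ := hBs n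
    obtain ⟨j, hj⟩ := ((htd.eventually_ge_atTop n).and
      ((hlim n).1.eventually (gt_mem_nhds Nat.one_div_pos_of_nat))).exists
    exact ⟨h j, hj⟩
  choose k hk hkBs using hsel
  have hktd : Tendsto (fun n => znorm (k n)) atTop atTop := tendsto_atTop_mono hk tendsto_id
  obtain ⟨φ, hφ, B, hB⟩ := hrich k hktd
  refine ⟨φ, hφ, B, ⟨fun n => k (φ n), hktd.comp hφ.tendsto_atTop, hB⟩, fun m => ?_⟩
  have hclose : Tendsto (fun n => ‖(Pproj N U m).comp (shiftedOp N U A (k n) - Bs n)‖)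
      atTop (𝓝 0) := by
    refine squeeze_zero' (Eventually.of_forall fun _ => norm_nonneg _) ?_
      tendsto_one_div_add_atTop_nhds_zero_nat
    filter_upwards [eventually_ge_atTop m] with n hn
    exact (norm_Pproj_comp_le_of_le hn _).trans (hkBs n).le
  refine squeeze_zero (fun _ => norm_nonneg _) (fun n => ?_)
    (by simpa only [add_zero] using (hB m).1.add (hclose.comp hφ.tendsto_atTop))
  calc ‖(Pproj N U m).comp (Bs (φ n) - B)‖
      = ‖(Pproj N U m).comp (shiftedOp N U A (k (φ n)) - B) -
          (Pproj N U m).comp (shiftedOp N U A (k (φ n)) - Bs (φ n))‖ := by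
        rw [← ContinuousLinearMap.comp_sub, sub_sub_sub_cancel_left]
    _ ≤ _ := norm_sub_le _ _

/-- Uniform Montel-ness of the `I - Bs n ∈ σ_op(K)` is what makes
`xs n = (I - Bs n) (xs n) + Bs n (xs n)` converge strictly along a subsequence. -/
lemma exists_isLimOp_apply_eq (hAS : MemSY N U A)
    (hA : A = ContinuousLinearMap.id ℂ (Yinf N U) - K) (hrich : RichY N U A)
    (hUM : UnifMontel N U {B | IsLimOpY N U K B})
    {Bs : ℕ → OpY N U} (hBs : ∀ n, IsLimOpY N U A (Bs n))
    {xs : ℕ → Yinf N U} {C : ℝ} (hxs : ∀ n, ‖xs n‖ ≤ C) {y : Yinf N U}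
    (hy : SConvY N U (fun n => Bs n (xs n)) y) :
    ∃ φ : ℕ → ℕ, StrictMono φ ∧ ∃ B, IsLimOpY N U A B ∧
      (∀ m, Tendsto (fun n => ‖(Pproj N U m).comp (Bs (φ n) - B)‖) atTop (𝓝 0)) ∧
      ∃ x₀, SConvY N U (fun n => xs (φ n)) x₀ ∧ B x₀ = y := by
  obtain ⟨φ₁, hφ₁, B, hB, hconv⟩ := hrich.exists_isLimOp_subseq hBs
  obtain ⟨φ₂, w, hφ₂, hw⟩ := hUM (fun i => ContinuousLinearMap.id ℂ (Yinf N U) - Bs (φ₁ i))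
    (fun i => isLimOp_id_sub hA (hBs (φ₁ i))) (fun i => xs (φ₁ i)) ⟨C, fun i => hxs _⟩
  have hφ := hφ₁.comp hφ₂
  have hconv' : ∀ m, Tendsto (fun n => ‖(Pproj N U m).comp (Bs (φ₁ (φ₂ n)) - B)‖)
      atTop (𝓝 0) := fun m => (hconv m).comp hφ₂.tendsto_atTop
  have hy' := hy.comp_strictMono hφ
  have hx : SConvY N U (fun n => xs (φ₁ (φ₂ n))) (w + y) := by
    simpa using hw.add hy'
  refine ⟨φ₁ ∘ φ₂, hφ, B, hB, hconv', w + y, hx, ?_⟩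
  exact ((hAS.of_isLimOp hB) _ _ hx).unique
    (SConvY.of_tendsto_Pproj_comp_sub hconv' (fun _ => hxs _) hy')

end LimitOperators

lemma exists_norm_eq_one_norm_apply_lt {𝕜 E F : Type*} [RCLike 𝕜] [NormedAddCommGroup E]
    [NormedSpace 𝕜 E] [NormedAddCommGroup F] [NormedSpace 𝕜 F] (B : E →L[𝕜] F) {ε : ℝ}
    {y : E} (hy : ‖B y‖ < ε * ‖y‖) : ∃ u : E, ‖u‖ = 1 ∧ ‖B u‖ < ε := by
  have hy₀ : y ≠ 0 := by
    rintro rfl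
    simp at hy
  refine ⟨(‖y‖ : 𝕜)⁻¹ • y, norm_smul_inv_norm hy₀, ?_⟩
  rw [map_smul, norm_smul, norm_inv, RCLike.norm_ofReal, abs_norm,
    inv_mul_lt_iff₀ (norm_pos_iff.2 hy₀), mul_comm]
  exact hy

lemma opNorm_le_inv_of_comp_eq_id {𝕜 E F : Type*} [NontriviallyNormedField 𝕜]
    [SeminormedAddCommGroup E] [NormedSpace 𝕜 E] [SeminormedAddCommGroup F] [NormedSpace 𝕜 F]
    {B : E →L[𝕜] F} {Binv : F →L[𝕜] E} {ν : ℝ} (hν : 0 < ν)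
    (hB : ∀ x, ν * ‖x‖ ≤ ‖B x‖) (hinv : B.comp Binv = ContinuousLinearMap.id 𝕜 F) :
    ‖Binv‖ ≤ ν⁻¹ :=
  ContinuousLinearMap.opNorm_le_bound _ (inv_nonneg.2 hν.le) fun y => by
    have hy : B (Binv y) = y := by simpa using ContinuousLinearMap.ext_iff.1 hinv y
    rw [← div_eq_inv_mul, le_div_iff₀' hν]
    simpa [hy] using hB (Binv y)

section MainArguments

variable {N : ℕ} {U : Type*} [NormedAddCommGroup U] [NormedSpace ℂ U] {K A : OpY N U}

lemma exists_isLimOp_almost_kernel_vector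
    (hA : ¬ ∃ ν : ℝ, 0 < ν ∧ ∀ B, IsLimOpY N U A B → ∀ x : Yinf N U, ν * ‖x‖ ≤ ‖B x‖)
    {ε : ℝ} (hε : 0 < ε) :
    ∃ B, IsLimOpY N U A B ∧ ∃ x : Yinf N U, ‖x‖ ≤ 1 ∧ 1 / 2 < ‖x 0‖ ∧ ‖B x‖ < ε := by
  push Not at hA
  obtain ⟨B, hB, y, hy⟩ := hA ε hε
  obtain ⟨u, hu, hBu⟩ := exists_norm_eq_one_norm_apply_lt B hy
  obtain ⟨k, hk⟩ : ∃ k, 1 / 2 < ‖u k‖ := by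
    by_contra! h
    linarith [BoundedContinuousFunction.norm_le_of_nonempty.2 h]
  refine ⟨shiftedOp N U B k, isLimOp_shiftedOp hB k, Vshift N U (-k) u,
    (norm_Vshift_apply_le _ _).trans hu.le, by simpa [Vshift_apply] using hk, ?_⟩
  rw [shiftedOp_apply, Vshift_Vshift_neg]
  exact (norm_Vshift_apply_le _ _).trans_lt hBu

lemma exists_pos_forall_isLimOp_bounded_below (hAS : MemSY N U A)
    (hA : A = ContinuousLinearMap.id ℂ (Yinf N U) - K) (hrich : RichY N U A)
    (hUM : UnifMontel N U {B | IsLimOpY N U K B})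
    (hinj : ∀ B, IsLimOpY N U A B → Function.Injective B) :
    ∃ ν : ℝ, 0 < ν ∧ ∀ B, IsLimOpY N U A B → ∀ x : Yinf N U, ν * ‖x‖ ≤ ‖B x‖ := by
  by_contra hcon
  choose Bs hBs xs hxs hxs₀ hBxs using fun n : ℕ =>
    exists_isLimOp_almost_kernel_vector hcon (Nat.one_div_pos_of_nat (n := n))
  have hBxs₀ : SConvY N U (fun n => Bs n (xs n)) 0 :=
    sConvY_zero_of_tendsto_norm <| squeeze_zero (fun _ => norm_nonneg _)
      (fun n => (hBxs n).le) tendsto_one_div_add_atTop_nhds_zero_nat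
  obtain ⟨φ, -, B, hB, -, x₀, hx₀, hBx₀⟩ :=
    exists_isLimOp_apply_eq hAS hA hrich hUM hBs hxs hBxs₀
  have hx₀0 : 1 / 2 ≤ ‖x₀ 0‖ :=
    ge_of_tendsto (hx₀.tendsto_apply 0).norm (Eventually.of_forall fun n => (hxs₀ (φ n)).le)
  have hx₀ne : x₀ ≠ 0 := by
    rintro rfl
    norm_num at hx₀0
  exact hx₀ne (hinj B hB (hBx₀.trans (map_zero B).symm))

lemma surjective_of_isLimOp_of_sDense (hAS : MemSY N U A)
    (hA : A = ContinuousLinearMap.id ℂ (Yinf N U) - K) (hrich : RichY N U A)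
    (hUM : UnifMontel N U {B | IsLimOpY N U K B}) {ν : ℝ} (hν : 0 < ν)
    (hbelow : ∀ B, IsLimOpY N U A B → ∀ x : Yinf N U, ν * ‖x‖ ≤ ‖B x‖)
    {σ : Set (OpY N U)} (hσ : SDense N U σ {B | IsLimOpY N U A B})
    (hsurj : ∀ B ∈ σ, Function.Surjective B) {B : OpY N U} (hB : IsLimOpY N U A B) :
    Function.Surjective B := by
  intro y
  obtain ⟨Bs, hBsσ, hBsB⟩ := hσ.2 B hB
  choose xs hxs using fun n => hsurj _ (hBsσ n) y
  have hxs_le : ∀ n, ‖xs n‖ ≤ ‖y‖ / ν := fun n => by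
    rw [le_div_iff₀' hν, ← hxs n]
    exact hbelow _ (hσ.1 (hBsσ n)) _
  obtain ⟨φ, hφ, B', -, hconv, x₀, -, hB'x₀⟩ := exists_isLimOp_apply_eq hAS hA hrich hUM
    (fun n => hσ.1 (hBsσ n)) hxs_le (by simp only [hxs]; exact sConvY_const y)
  have hB' : B' = B := ContinuousLinearMap.ext fun x =>
    (sConvY_const (B' x)).unique <| SConvY.of_tendsto_Pproj_comp_sub (x := fun _ => x) hconv
      (fun _ => le_rfl) ((hBsB x).comp_strictMono hφ)
  subst hB'
  exact ⟨x₀, hB'x₀⟩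

end MainArguments

theorem statement1_general (N : ℕ) (U : Type*)
    [NormedAddCommGroup U] [NormedSpace ℂ U]
    (K A : OpY N U) (hKS : MemSY N U K)
    (hA : A = ContinuousLinearMap.id ℂ (Yinf N U) - K)
    (hrich : RichY N U A)
    (hUM : UnifMontel N U {B | IsLimOpY N U K B})
    (hinj : ∀ B : OpY N U, IsLimOpY N U A B → Function.Injective B) :
    (∃ ν : ℝ, 0 < ν ∧ ∀ B : OpY N U, IsLimOpY N U A B →
      ∀ x : Yinf N U, ν * ‖x‖ ≤ ‖B x‖) ∧
    (∀ σ : Set (OpY N U), SDense N U σ {B | IsLimOpY N U A B} →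
      (∀ B ∈ σ, Function.Surjective B) →
      (∀ B : OpY N U, IsLimOpY N U A B → Function.Bijective B) ∧
      ∃ M : ℝ, ∀ B : OpY N U, IsLimOpY N U A B → ∀ Binv : OpY N U,
        (B.comp Binv = ContinuousLinearMap.id ℂ (Yinf N U) ∧
         Binv.comp B = ContinuousLinearMap.id ℂ (Yinf N U)) → ‖Binv‖ ≤ M) := by
  have hAS : MemSY N U A := hA ▸ memSY_id.sub hKS
  obtain ⟨ν, hν, hbelow⟩ := exists_pos_forall_isLimOp_bounded_below hAS hA hrich hUM hinj
  refine ⟨⟨ν, hν, hbelow⟩, fun σ hσ hsurj => ⟨fun B hB => ⟨hinj B hB, ?_⟩, ν⁻¹, ?_⟩⟩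
  · exact surjective_of_isLimOp_of_sDense hAS hA hrich hUM hν hbelow hσ hsurj hB
  · exact fun B hB Binv hinv => opNorm_le_inv_of_comp_eq_id hν (hbelow B hB) hinv.1

/-- If `A = I - K` with `K ∈ S(Y)`, `A` rich, `σ_op(K)`
uniformly Montel, and all limit operators of `A` injective, then `σ_op(A)` is
uniformly bounded below; if moreover `σ_op(A)` has an `S`-dense subset of
surjective operators, then all its elements are invertible with uniformly
bounded inverses. -/
theorem statement1 (N : ℕ) (hN : 0 < N) (U : Type*)
    [NormedAddCommGroup U] [NormedSpace ℂ U] [CompleteSpace U]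
    (K A : OpY N U) (hKS : MemSY N U K)
    (hA : A = ContinuousLinearMap.id ℂ (Yinf N U) - K)
    (hrich : RichY N U A)
    (hUM : UnifMontel N U {B | IsLimOpY N U K B})
    (hinj : ∀ B : OpY N U, IsLimOpY N U A B → Function.Injective B) :
    (∃ ν : ℝ, 0 < ν ∧ ∀ B : OpY N U, IsLimOpY N U A B →
      ∀ x : Yinf N U, ν * ‖x‖ ≤ ‖B x‖) ∧
    (∀ σ : Set (OpY N U), SDense N U σ {B | IsLimOpY N U A B} →
      (∀ B ∈ σ, Function.Surjective B) →
      (∀ B : OpY N U, IsLimOpY N U A B → Function.Bijective B) ∧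
      ∃ M : ℝ, ∀ B : OpY N U, IsLimOpY N U A B → ∀ Binv : OpY N U,
        (B.comp Binv = ContinuousLinearMap.id ℂ (Yinf N U) ∧
         Binv.comp B = ContinuousLinearMap.id ℂ (Yinf N U)) → ‖Binv‖ ≤ M) :=
  statement1_general N U K A hKS hA hrich hUM hinj
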